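/- Let r ≥ 2 and N ≥ 1. For all vectors a, b ∈ ℝᴺ, ((|a|^{r−2}a − |b|^{r−2}b) · (a − b)) ≥ 2^{2−r}·|a − b|^r, where |a|^{r−2}a is interpreted as 0 when a = 0. -/

import Mathlib

/-!
With `s = ‖a‖`, `t = ‖b‖` and `u = ‖a - b‖²`, the inner product equals
`s^r + t^r - (s^(r-2) + t^(r-2)) (s² + t² - u) / 2`, which is affine in `u`, while the left-hand
side `2^(2-r) u^(r/2)` is convex in `u`. Since `u` ranges over `[(s - t)², (s + t)²]`, it suffices
to check the two endpoints, i.e. collinear `a` and `b`. When they point in opposite directions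
this is the power-mean inequality `2^(1-q) (s + t)^q ≤ s^q + t^q` for `q = r - 1 ≥ 1`; when they
point in the same direction it is the superadditivity `(s - t)^q + t^q ≤ s^q` together with
`2^(1-q) ≤ 1`.
-/

open scoped Classical RealInnerProductSpace

theorem ConvexOn.le_affine_of_mem_segment {S : Set ℝ} {f : ℝ → ℝ} (hf : ConvexOn ℝ S f)
    {x y z α β : ℝ} (hx : x ∈ S) (hy : y ∈ S) (hz : z ∈ segment ℝ x y)
    (hfx : f x ≤ α + β * x) (hfy : f y ≤ α + β * y) : f z ≤ α + β * z := by
  obtain ⟨θ₁, θ₂, hθ₁, hθ₂, hθ, rfl⟩ := hz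
  calc f (θ₁ • x + θ₂ • y) ≤ θ₁ • f x + θ₂ • f y := hf.2 hx hy hθ₁ hθ₂ hθ
    _ ≤ θ₁ * (α + β * x) + θ₂ * (α + β * y) := by simp only [smul_eq_mul]; gcongr
    _ = α + β * (θ₁ • x + θ₂ • y) := by simp only [smul_eq_mul]; linear_combination α * hθ

namespace Real

lemma rpow_eq_rpow_sub_one_mul {x r : ℝ} (hx : 0 ≤ x) (hr : r ≠ 0) : x ^ r = x ^ (r - 1) * x := by
  simpa using rpow_add_one' hx (y := r - 1) (by simpa using hr)

lemma rpow_eq_rpow_sub_two_mul_sq {x r : ℝ} (hx : 0 ≤ x) (hr : r ≠ 0) :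
    x ^ r = x ^ (r - 2) * x ^ 2 := by
  rw [← rpow_natCast, ← rpow_add' hx] <;> norm_num [hr]

lemma sq_rpow_half {x : ℝ} (hx : 0 ≤ x) (r : ℝ) : (x ^ 2) ^ (r / 2) = x ^ r := by
  rw [← rpow_two, ← rpow_mul hx]
  ring_nf

lemma two_rpow_one_sub_mul_add_rpow_le {q s t : ℝ} (hq : 1 ≤ q) (hs : 0 ≤ s) (ht : 0 ≤ t) :
    2 ^ (1 - q) * (s + t) ^ q ≤ s ^ q + t ^ q := by
  lift s to NNReal using hs
  lift t to NNReal using ht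
  have hmean : ((s : ℝ) + t) ^ q ≤ 2 ^ (q - 1) * ((s : ℝ) ^ q + (t : ℝ) ^ q) := by
    exact_mod_cast NNReal.rpow_add_le_mul_rpow_add_rpow s t hq
  have hcoeff : (2 : ℝ) ^ (1 - q) * 2 ^ (q - 1) = 1 := by
    rw [← rpow_add two_pos, sub_add_sub_cancel', sub_self, rpow_zero]
  calc 2 ^ (1 - q) * ((s : ℝ) + t) ^ q
      ≤ 2 ^ (1 - q) * (2 ^ (q - 1) * ((s : ℝ) ^ q + (t : ℝ) ^ q)) := by gcongr
    _ = (s : ℝ) ^ q + (t : ℝ) ^ q := by rw [← mul_assoc, hcoeff, one_mul]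

lemma two_rpow_one_sub_mul_sub_rpow_le {q s t : ℝ} (hq : 1 ≤ q) (ht : 0 ≤ t) (hts : t ≤ s) :
    2 ^ (1 - q) * (s - t) ^ q ≤ s ^ q - t ^ q := by
  have hsuper := add_rpow_le_rpow_add (sub_nonneg.2 hts) ht hq
  rw [sub_add_cancel] at hsuper
  have hcoeff : (2 : ℝ) ^ (1 - q) ≤ 1 := rpow_le_one_of_one_le_of_nonpos one_le_two (by linarith)
  have := mul_le_of_le_one_left (rpow_nonneg (sub_nonneg.2 hts) q) hcoeff
  linarith

lemma two_rpow_two_sub_mul_rpow_le {r s t d : ℝ} (hr : 2 ≤ r) (hs : 0 ≤ s) (ht : 0 ≤ t)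
    (hd₁ : |s - t| ≤ d) (hd₂ : d ≤ s + t) :
    2 ^ (2 - r) * d ^ r ≤
      s ^ r + t ^ r - (s ^ (r - 2) + t ^ (r - 2)) * ((s ^ 2 + t ^ 2 - d ^ 2) / 2) := by
  wlog hts : t ≤ s generalizing s t
  · convert this ht hs (by rwa [abs_sub_comm]) (by rwa [add_comm]) (le_of_not_ge hts) using 1
    ring
  have hd : 0 ≤ d := (abs_nonneg _).trans hd₁
  have hpow (x : ℝ) (hx : 0 ≤ x) : x ^ r = x ^ (r - 1) * x ∧ x ^ (r - 1) = x ^ (r - 2) * x := by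
    refine ⟨rpow_eq_rpow_sub_one_mul hx (by linarith), ?_⟩
    rw [rpow_eq_rpow_sub_one_mul hx (by linarith : r - 1 ≠ 0)]
    ring_nf
  obtain ⟨hsr, hsr'⟩ := hpow s hs
  obtain ⟨htr, htr'⟩ := hpow t ht
  have hexp : 2 - r = 1 - (r - 1) := by ring
  have hopposite : 2 ^ (2 - r) * (s + t) ^ r ≤ (s ^ (r - 1) + t ^ (r - 1)) * (s + t) := by
    rw [(hpow (s + t) (by positivity)).1, hexp, ← mul_assoc]
    gcongr
    exact two_rpow_one_sub_mul_add_rpow_le (by linarith) hs ht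
  have hsame : 2 ^ (2 - r) * (s - t) ^ r ≤ (s ^ (r - 1) - t ^ (r - 1)) * (s - t) := by
    have hst : 0 ≤ s - t := sub_nonneg.2 hts
    rw [(hpow (s - t) hst).1, hexp, ← mul_assoc]
    gcongr
    exact two_rpow_one_sub_mul_sub_rpow_le (by linarith) ht hts
  have hconvex : ConvexOn ℝ (Set.Ici 0) fun u : ℝ ↦ 2 ^ (2 - r) * u ^ (r / 2) :=
    (convexOn_rpow (by linarith)).smul (by positivity)
  have hseg : d ^ 2 ∈ segment ℝ ((s - t) ^ 2) ((s + t) ^ 2) := by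
    rw [segment_eq_Icc (by nlinarith), ← sq_abs (s - t)]
    exact ⟨pow_le_pow_left₀ (abs_nonneg _) hd₁ 2, pow_le_pow_left₀ hd hd₂ 2⟩
  have key := hconvex.le_affine_of_mem_segment (sq_nonneg (s - t)) (sq_nonneg (s + t)) hseg
    (α := s ^ r + t ^ r - (s ^ (r - 2) + t ^ (r - 2)) * ((s ^ 2 + t ^ 2) / 2))
    (β := (s ^ (r - 2) + t ^ (r - 2)) / 2)
    (by
      rw [sq_rpow_half (sub_nonneg.2 hts)]
      convert hsame using 1
      rw [hsr, htr, hsr', htr']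
      ring)
    (by
      rw [sq_rpow_half (by positivity)]
      convert hopposite using 1
      rw [hsr, htr, hsr', htr']
      ring)
  rw [sq_rpow_half hd] at key
  linarith

end Real

section InnerProductSpace

variable {F : Type*} [NormedAddCommGroup F] [InnerProductSpace ℝ F]

lemma inner_rpow_smul_sub_rpow_smul {r : ℝ} (hr : r ≠ 0) (a b : F) :
    ⟪‖a‖ ^ (r - 2) • a - ‖b‖ ^ (r - 2) • b, a - b⟫ =
      ‖a‖ ^ r + ‖b‖ ^ r - (‖a‖ ^ (r - 2) + ‖b‖ ^ (r - 2)) * ⟪a, b⟫ := by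
  simp only [inner_sub_left, inner_sub_right, real_inner_smul_left, real_inner_self_eq_norm_sq,
    real_inner_comm a b, Real.rpow_eq_rpow_sub_two_mul_sq (norm_nonneg a) hr,
    Real.rpow_eq_rpow_sub_two_mul_sq (norm_nonneg b) hr]
  ring

theorem two_rpow_two_sub_mul_norm_sub_rpow_le_inner {r : ℝ} (hr : 2 ≤ r) (a b : F) :
    2 ^ (2 - r) * ‖a - b‖ ^ r ≤ ⟪‖a‖ ^ (r - 2) • a - ‖b‖ ^ (r - 2) • b, a - b⟫ := by
  have hpolar : ⟪a, b⟫ = (‖a‖ ^ 2 + ‖b‖ ^ 2 - ‖a - b‖ ^ 2) / 2 := by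
    rw [norm_sub_sq_real]
    ring
  rw [inner_rpow_smul_sub_rpow_smul (by linarith), hpolar]
  exact Real.two_rpow_two_sub_mul_rpow_le hr (norm_nonneg a) (norm_nonneg b)
    (abs_norm_sub_norm_le a b) (norm_sub_le a b)

end InnerProductSpace

theorem stmt7_general (r : ℝ) (hr : 2 ≤ r) (N : ℕ)
    (a b : EuclideanSpace ℝ (Fin N)) :
    (2:ℝ) ^ (2 - r) * ‖a - b‖ ^ r ≤
      ⟪(if a = 0 then 0 else ‖a‖ ^ (r - 2) • a) -
        (if b = 0 then 0 else ‖b‖ ^ (r - 2) • b), a - b⟫ := by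
  have hzero (x : EuclideanSpace ℝ (Fin N)) :
      (if x = 0 then 0 else ‖x‖ ^ (r - 2) • x) = ‖x‖ ^ (r - 2) • x := by
    split_ifs with hx <;> simp [hx]
  rw [hzero, hzero]
  exact two_rpow_two_sub_mul_norm_sub_rpow_le_inner hr a b

theorem stmt7 (r : ℝ) (hr : 2 ≤ r) (N : ℕ) (hN : 1 ≤ N)
    (a b : EuclideanSpace ℝ (Fin N)) :
    (2:ℝ) ^ (2 - r) * ‖a - b‖ ^ r ≤
      ⟪(if a = 0 then 0 else ‖a‖ ^ (r - 2) • a) -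
        (if b = 0 then 0 else ‖b‖ ^ (r - 2) • b), a - b⟫ :=
  stmt7_general r hr N a b
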